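/- If u is a path from vertex i to vertex j in KΔ, v is a path from j to i in KΔ_{T_α(A)}, and neither uv nor vu is an α-revived cycle, then φ_2(v)(ū) = φ_2(vu)(ē_j) = φ_2(uv)(ē_i). -/

import Mathlib

noncomputable section
open Classical

/-- A quiver, given by a type of vertices and a family of types of arrows. -/
structure QD : Type 1 where
  V : Type
  Ar : V → V → Type

namespace QD

variable {Q : QD}

/-- Oriented paths in a quiver, composed from left to right. -/
inductive Path (Q : QD) : Q.V → Q.V → Type
  | nil (i : Q.V) : Path Q i i
  | cons {i j k : Q.V} (a : Q.Ar i j) (p : Path Q j k) : Path Q i k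

namespace Path

/-- Concatenation of paths. -/
def comp : {i j k : Q.V} → Path Q i j → Path Q j k → Path Q i k
  | _, _, _, nil _, q => q
  | _, _, _, cons a p, q => cons a (comp p q)

/-- Length of a path. -/
def length : {i j : Q.V} → Path Q i j → ℕ
  | _, _, nil _ => 0
  | _, _, cons _ p => length p + 1

end Path

/-- A path bundled with its endpoints. -/
def PathIn (Q : QD) : Type := Σ i : Q.V, Σ j : Q.V, Path Q i j

/-- Bundle a path with its endpoints. -/
def Path.sig {i j : Q.V} (p : Path Q i j) : PathIn Q := ⟨i, j, p⟩

/-- The arrow `a` occurs in the path `p`. -/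
def Path.arrowMem {i j : Q.V} (a : Q.Ar i j) : {u v : Q.V} → Path Q u v → Prop
  | _, _, Path.nil _ => False
  | _, _, @Path.cons _ u u' _ b p =>
      (⟨u, u', b⟩ : Σ i : Q.V, Σ j : Q.V, Q.Ar i j) = ⟨i, j, a⟩ ∨ Path.arrowMem a p

end QD

/-- The path algebra of a quiver over a field `K`, described axiomatically:
an algebra with a basis indexed by the paths, multiplying by concatenation. -/
structure PathAlg (K : Type) [Field K] (Q : QD) [Fintype Q.V] where
  P : Type
  [ringP : Ring P]
  [algP : Algebra K P]
  ι : {i j : Q.V} → Q.Path i j → P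
  ι_comp : ∀ {i j k : Q.V} (p : Q.Path i j) (q : Q.Path j k), ι (p.comp q) = ι p * ι q
  ι_ortho : ∀ {i j k l : Q.V} (p : Q.Path i j) (q : Q.Path k l), j ≠ k → ι p * ι q = 0
  sum_nil : (∑ i : Q.V, ι (QD.Path.nil i)) = 1
  li : LinearIndependent K (fun p : QD.PathIn Q => ι p.2.2)
  span_top : Submodule.span K (Set.range (fun p : QD.PathIn Q => ι p.2.2)) = ⊤

attribute [instance] PathAlg.ringP PathAlg.algP

section Main

variable (K : Type) [Field K] (Q : QD) [Fintype Q.V] [∀ i j : Q.V, Fintype (Q.Ar i j)]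
variable (n : ℕ) (PA : PathAlg K Q)

/-- The relation whose `RingQuot` is the truncated quiver algebra `KΔ/R_Δ^n`:
identify with `0` the image of every path of length at least `n`. -/
def truncRel : PA.P → PA.P → Prop := fun u v =>
  v = 0 ∧ ∃ p : QD.PathIn Q, n ≤ p.2.2.length ∧ u = PA.ι p.2.2

/-- The truncated quiver algebra `A = KΔ/R_Δ^n`. -/
abbrev TA : Type := RingQuot (truncRel K Q n PA)

/-- The class in `A = KΔ/R_Δ^n` of a path of `Δ`. -/
def cls {i j : Q.V} (p : Q.Path i j) : TA K Q n PA :=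
  RingQuot.mkAlgHom K (truncRel K Q n PA) (PA.ι p)

/-- Index type for the canonical basis of the truncated algebra: paths of length `< n`. -/
abbrev Short : Type := {p : QD.PathIn Q // p.2.2.length < n}

/-- The Jacobson radical of the truncated algebra. -/
def JradA : Ideal (TA K Q n PA) := Ideal.jacobson ⊥

/-- The socle of `A` as an `A`-bimodule: the two-sided annihilator of the radical,
viewed as a `K`-subspace. -/
def socA : Submodule K (TA K Q n PA) where
  carrier := {z | ∀ r ∈ JradA K Q n PA, r * z = 0 ∧ z * r = 0}
  add_mem' := by
    intro a b ha hb r hr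
    exact ⟨by rw [mul_add, (ha r hr).1, (hb r hr).1, add_zero],
      by rw [add_mul, (ha r hr).2, (hb r hr).2, add_zero]⟩
  zero_mem' := by intro r hr; simp
  smul_mem' := by
    intro c z hz r hr
    exact ⟨by rw [Algebra.mul_smul_comm, (hz r hr).1, smul_zero],
      by rw [Algebra.smul_mul_assoc, (hz r hr).2, smul_zero]⟩

variable (basA : Module.Basis (Short Q n) K (TA K Q n PA))

/-- The dual-basis functional `p̄^*` attached to a path `p` (zero if `p` is long). -/
def coordP (p : QD.PathIn Q) : Module.Dual K (TA K Q n PA) :=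
  if h : p.2.2.length < n then basA.coord ⟨p, h⟩ else 0

variable (s : ℕ) [NeZero s] (w : ZMod s → Q.V) (x : ∀ i : ZMod s, Q.Ar (w i) (w (i + 1)))

/-- The segment `x_i x_{i+1} ⋯ x_{i+m-1}` of the fixed basic cycle `γ = x_1 ⋯ x_s`. -/
def seg : (i : ZMod s) → (m : ℕ) → Q.Path (w i) (w (i + (m : ZMod s)))
  | i, 0 => cast (congrArg (fun v : ZMod s => Q.Path (w i) (w v)) (by push_cast; ring))
      (QD.Path.nil (w i))
  | i, m + 1 => cast (congrArg (fun v : ZMod s => Q.Path (w i) (w v)) (by push_cast; ring))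
      (QD.Path.cons (x i) (seg (i + 1) m))

variable (k : K)

/-- The value `α_r(ā, b̄)` of the `r`-th summand of the `2`-cocycle attached to `γ`. -/
def aTerm {i j l : Q.V} (a : Q.Path i j) (b : Q.Path j l) (r : ZMod s) :
    Module.Dual K (TA K Q n PA) :=
  if (cls K Q n PA a ≠ 0 ∧ cls K Q n PA b ≠ 0 ∧ n ≤ (a.comp b).length ∧ (a.comp b).length < s ∧
      (a.comp b).sig = (seg Q s w x r (a.comp b).length).sig) then
    coordP K Q n PA basA
      ((seg Q s w x (r + ((a.comp b).length : ZMod s)) (s - (a.comp b).length)).sig)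
  else if (cls K Q n PA a ≠ 0 ∧ cls K Q n PA b ≠ 0 ∧ (a.comp b).length = s ∧
      (a.comp b).sig = (seg Q s w x r s).sig) then
    coordP K Q n PA basA ((QD.Path.nil (w r)).sig)
  else 0

variable (αm : TA K Q n PA →ₗ[K] TA K Q n PA →ₗ[K] Module.Dual K (TA K Q n PA))
variable (t : ℕ) (pM : Fin t → QD.PathIn Q)

/-- The ordinary quiver of the Hochschild extension algebra: the quiver `Δ` together with
one extra arrow `y_{p_m} : t(p_m) → s(p_m)` for every `m`. -/
abbrev Qe : QD where
  V := Q.V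
  Ar := fun i j => Q.Ar i j ⊕ {m : Fin t // (pM m).2.1 = i ∧ (pM m).1 = j}

/-- The inclusion of paths of `Δ` into paths of the extended quiver. -/
def embed : {i j : Q.V} → Q.Path i j → (Qe Q t pM).Path i j
  | _, _, QD.Path.nil i => QD.Path.nil (Q := Qe Q t pM) i
  | _, _, QD.Path.cons a p => QD.Path.cons (Q := Qe Q t pM) (Sum.inl a) (embed p)

/-- The number of `y`-arrows occurring in a path of the extended quiver. -/
def numY : {i j : Q.V} → (Qe Q t pM).Path i j → ℕ
  | _, _, QD.Path.nil _ => 0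
  | i, _, @QD.Path.cons _ _ j' _ a p =>
      (match (a : Q.Ar i j' ⊕ {m : Fin t // (pM m).2.1 = i ∧ (pM m).1 = j'}) with
        | Sum.inl _ => 0
        | Sum.inr _ => 1) + numY p

/-- The arrow `y_{p_m}` of the extended quiver. -/
def yArr (m : Fin t) : (Qe Q t pM).Ar (pM m).2.1 (pM m).1 := Sum.inr ⟨m, rfl, rfl⟩

/-- `C` is an `α`-revived cycle of `Δ`. -/
def IsRev {h : Q.V} (C : Q.Path h h) : Prop :=
  ∃ (j : Q.V) (a : Q.Path h j) (b : Q.Path j h),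
    0 < a.length ∧ 0 < b.length ∧ cls K Q n PA a ≠ 0 ∧ cls K Q n PA b ≠ 0 ∧
    C = a.comp b ∧ αm (cls K Q n PA a) (cls K Q n PA b) ≠ 0

/-- `C` is an `α`-revived cycle, viewed inside the extended quiver. -/
def IsRevE {h : Q.V} (C : (Qe Q t pM).Path h h) : Prop :=
  ∃ C₀ : Q.Path h h, C = embed Q t pM C₀ ∧ IsRev K Q n PA αm C₀

/-- `C` is an elementary cycle of weight `wt`. -/
def IsElemW {h : Q.V} (C : (Qe Q t pM).Path h h) (wt : K) : Prop :=
  ∃ (m : Fin t) (δ₂ : Q.Path h (pM m).2.1) (δ₁ : Q.Path (pM m).1 h),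
    C = (embed Q t pM δ₂).comp (QD.Path.cons (yArr Q t pM m) (embed Q t pM δ₁)) ∧
    coordP K Q n PA basA (pM m) (cls K Q n PA (δ₁.comp δ₂)) = wt ∧ wt ≠ 0

/-- `C` is an elementary cycle. -/
def IsElem {h : Q.V} (C : (Qe Q t pM).Path h h) : Prop :=
  ∃ wt : K, IsElemW K Q n PA basA t pM C wt

/-- `C` is a nonzero cycle (elementary or `α`-revived) with weight `wt`. -/
def HasWt {h : Q.V} (C : (Qe Q t pM).Path h h) (wt : K) : Prop :=
  IsElemW K Q n PA basA t pM C wt ∨ (IsRevE K Q n PA αm t pM C ∧ wt = k)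

/-- The left action of `A` on `D(A) = Hom_K(A, K)`: `(a · f)(z) = f(z * a)`. -/
def dL (a : TA K Q n PA) (f : Module.Dual K (TA K Q n PA)) : Module.Dual K (TA K Q n PA) :=
  f ∘ₗ LinearMap.mulRight K a

/-- The right action of `A` on `D(A) = Hom_K(A, K)`: `(f · b)(z) = f(b * z)`. -/
def dR (f : Module.Dual K (TA K Q n PA)) (b : TA K Q n PA) : Module.Dual K (TA K Q n PA) :=
  f ∘ₗ LinearMap.mulLeft K b

variable (T : Type) [Ring T] [Algebra K T]
variable (eT : T ≃ₗ[K] TA K Q n PA × Module.Dual K (TA K Q n PA))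
variable (PB : PathAlg K (Qe Q t pM))
variable (Φm : PB.P →ₐ[K] T)

/-- `φ₁ = π₁ ∘ Φ`. -/
def ph1 (z : PB.P) : TA K Q n PA := (eT (Φm z)).1

/-- `φ₂ = π₂ ∘ Φ`. -/
def ph2 (z : PB.P) : Module.Dual K (TA K Q n PA) := (eT (Φm z)).2

/-- The primitive idempotent of `T` corresponding to a vertex. -/
def eV (i : Q.V) : T := eT.symm (cls K Q n PA (QD.Path.nil i), 0)

end Main

section Extra

variable (K : Type) [Field K] (Q : QD) [Fintype Q.V] [∀ i j : Q.V, Fintype (Q.Ar i j)]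
variable (n : ℕ) (PA : PathAlg K Q)
variable (t : ℕ) (pM : Fin t → QD.PathIn Q)
variable (T : Type) [Ring T] [Algebra K T]
variable (PB : PathAlg K (Qe Q t pM))
variable (Φm : PB.P →ₐ[K] T)

/-- The Jacobson radical of a ring. -/
def JT : Ideal T := Ideal.jacobson ⊥

/-- The Jacobson radical, viewed as a `K`-subspace. -/
def JTK : Submodule K T := Submodule.restrictScalars K (JT T)

/-- The square of the Jacobson radical, as a `K`-subspace. -/
def J2K : Submodule K T := JTK K T * JTK K T

/-- The number of arrows `i → j` in the Gabriel (ordinary) quiver of `T`,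
i.e. `dim_K e_i (rad T / rad² T) e_j`. -/
def gabrielCount (ei ej : T) : ℕ :=
  Module.finrank K
      ↥(Submodule.span K {y : T | ∃ z ∈ JT T, y = ei * z * ej} ⊔ J2K K T)
    - Module.finrank K ↥(J2K K T)

/-- `e` is a primitive idempotent. -/
def IsPrimIdem (e : T) : Prop :=
  e * e = e ∧ e ≠ 0 ∧
  ∀ f g : T, f * f = f → g * g = g → f * g = 0 → g * f = 0 → e = f + g → f = 0 ∨ g = 0

/-- `a` is an arrow of the ring `T` in the sense of Brenner:
`a ∈ rad T \ rad² T` and `a = x a y` for primitive idempotents `x, y`. -/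
def IsArrowT (a : T) : Prop :=
  a ∈ JT T ∧ a ∉ J2K K T ∧
  ∃ e f : T, IsPrimIdem T e ∧ IsPrimIdem T f ∧ a = e * a * f

/-- `rad (T e)`, a left submodule. -/
def radLe (e : T) : Submodule T T := Submodule.span T ((fun z => z * e) '' (JT T : Set T))

/-- `rad (e T)`, a right submodule. -/
def radRe (e : T) : Submodule Tᵐᵒᵖ T := Submodule.span Tᵐᵒᵖ ((fun z => e * z) '' (JT T : Set T))

/-- `Λ` is a complete set of arrows for `rad (T e)`. -/
def CompleteL (e : T) (Λ : Set T) : Prop :=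
  (∀ a ∈ Λ, IsArrowT K T a) ∧ Submodule.span T Λ = radLe T e ∧
  ∀ Λ' ⊂ Λ, Submodule.span T Λ' ≠ radLe T e

/-- `Γ` is a complete set of arrows for `rad (e T)`. -/
def CompleteR (e : T) (Γ : Set T) : Prop :=
  (∀ a ∈ Γ, IsArrowT K T a) ∧ Submodule.span Tᵐᵒᵖ Γ = radRe T e ∧
  ∀ Γ' ⊂ Γ, Submodule.span Tᵐᵒᵖ Γ' ≠ radRe T e

/-- `(N, nn) ∈ 𝒩` in the sense of Brenner, for the primitive idempotent `e`. -/
def mcN (e : T) (N nn : ℕ) : Prop :=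
  ∃ Λ Γ : Fin (nn + 1) → Set T,
    (∀ i : Fin (nn + 1), (i : ℕ) ≠ 0 → (Λ i).Nonempty ∧ (Γ i).Nonempty) ∧
    (∀ i j : Fin (nn + 1), i ≠ j → Λ i ∩ Λ j = ∅ ∧ Γ i ∩ Γ j = ∅) ∧
    CompleteL K T e (⋃ i, Λ i) ∧ CompleteR K T e (⋃ i, Γ i) ∧
    (∀ i j : Fin (nn + 1), (i ≠ j ∨ (i : ℕ) = 0 ∨ (j : ℕ) = 0) →
      ∀ a ∈ Λ i, ∀ b ∈ Γ j, a * b = 0) ∧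
    N = nn + (Λ 0).ncard

/-- The set `𝒞_h` of oriented cycles at `h` of the extended quiver that are
nonzero in the Hochschild extension algebra. -/
def Ch (h : Q.V) : Type :=
  {C : (Qe Q t pM).Path h h // 0 < C.length ∧ Φm (PB.ι C) ≠ 0}

/-- The relation `ℛ` on `𝒞_h`: the two cycles share an arrow which starts or ends at `h`. -/
def Rc (h : Q.V) (C C' : Ch K Q t pM T PB Φm h) : Prop :=
  ∃ (u v : Q.V) (a : (Qe Q t pM).Ar u v), (u = h ∨ v = h) ∧
    QD.Path.arrowMem a C.1 ∧ QD.Path.arrowMem a C'.1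

/-- `card (𝒞_h / ≡)`, the number of equivalence classes of `𝒞_h` under the equivalence
relation generated by `ℛ`. -/
def NCh (h : Q.V) : ℕ := Nat.card (Quot (Rc K Q t pM T PB Φm h))

/-- The set `𝒜_h` of arrows of the extended quiver ending at `h`. -/
def Ah (h : Q.V) : Type := Σ u : Q.V, (Qe Q t pM).Ar u h

/-- The relation `ℛ'` on `𝒜_h`: there is an arrow `b` with `ab ≠ 0 ≠ a'b` in `T_α(A)`. -/
def Ra (h : Q.V) (a a' : Ah Q t pM h) : Prop :=
  ∃ (v : Q.V) (b : (Qe Q t pM).Ar h v),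
    Φm (PB.ι (QD.Path.cons a.2 (QD.Path.cons b (QD.Path.nil (Q := Qe Q t pM) v)))) ≠ 0 ∧
    Φm (PB.ι (QD.Path.cons a'.2 (QD.Path.cons b (QD.Path.nil (Q := Qe Q t pM) v)))) ≠ 0

/-- `card (𝒜_h / ≈)`. -/
def NAh (h : Q.V) : ℕ := Nat.card (Quot (Ra K Q t pM T PB Φm h))

end Extra

/-- An `R`-module is indecomposable if it is nonzero and is not the internal direct
sum of two nonzero submodules. -/
def Indec (R M : Type) [Ring R] [AddCommGroup M] [Module R M] : Prop :=
  (⊥ : Submodule R M) ≠ ⊤ ∧ ∀ p q : Submodule R M, IsCompl p q → p = ⊥ ∨ q = ⊥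


section AuxPath

namespace QD.Path

variable {Q : QD}

theorem comp_nil : ∀ {i j : Q.V} (p : Q.Path i j), p.comp (QD.Path.nil j) = p
  | _, _, nil i => rfl
  | _, _, cons a p => by rw [comp, comp_nil p]

theorem comp_assoc : ∀ {i j k l : Q.V} (p : Q.Path i j) (q : Q.Path j k) (r : Q.Path k l),
    (p.comp q).comp r = p.comp (q.comp r)
  | _, _, _, _, nil _, _, _ => rfl
  | _, _, _, _, cons a p, q, r => by rw [comp, comp, comp, comp_assoc p q r]

theorem length_comp : ∀ {i j k : Q.V} (p : Q.Path i j) (q : Q.Path j k),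
    (p.comp q).length = p.length + q.length
  | _, _, _, nil _, q => (Nat.zero_add _).symm
  | _, _, _, cons a p, q => by rw [comp, length, length, length_comp p q]; omega

/-- The list of (bundled) arrows of a path. -/
def arrs : {i j : Q.V} → Q.Path i j → List (Σ i : Q.V, Σ j : Q.V, Q.Ar i j)
  | _, _, nil _ => []
  | _, _, @cons _ i c _ a p => ⟨i, c, a⟩ :: arrs p

@[simp] theorem arrs_nil {i : Q.V} : (QD.Path.nil (Q := Q) i).arrs = [] := rfl

@[simp] theorem arrs_cons {i c j : Q.V} (a : Q.Ar i c) (p : Q.Path c j) :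
    (QD.Path.cons a p).arrs = ⟨i, c, a⟩ :: p.arrs := rfl

theorem arrs_comp : ∀ {i j k : Q.V} (p : Q.Path i j) (q : Q.Path j k),
    (p.comp q).arrs = p.arrs ++ q.arrs
  | _, _, _, nil _, q => rfl
  | _, _, _, cons a p, q => by rw [comp, arrs_cons, arrs_cons, arrs_comp p q]; rfl

theorem length_arrs : ∀ {i j : Q.V} (p : Q.Path i j), p.arrs.length = p.length
  | _, _, nil _ => rfl
  | _, _, cons a p => by rw [arrs_cons, length, List.length_cons, length_arrs p]

theorem sig_heq {i j i' j' : Q.V} {p : Q.Path i j} {q : Q.Path i' j'} (h : p.sig = q.sig) :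
    i = i' ∧ j = j' ∧ HEq p q := by
  have h : (⟨i, j, p⟩ : Σ i : Q.V, Σ j : Q.V, QD.Path Q i j) = ⟨i', j', q⟩ := h
  rw [Sigma.mk.inj_iff] at h
  obtain ⟨rfl, h⟩ := h
  rw [heq_eq_eq, Sigma.mk.inj_iff] at h
  obtain ⟨rfl, h⟩ := h
  exact ⟨rfl, rfl, h⟩

theorem eq_of_sig {i j : Q.V} {p q : Q.Path i j} (h : p.sig = q.sig) : p = q :=
  eq_of_heq (sig_heq h).2.2

theorem arrs_of_sig {i j i' j' : Q.V} {p : Q.Path i j} {q : Q.Path i' j'}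
    (h : p.sig = q.sig) : p.arrs = q.arrs := by
  obtain ⟨rfl, rfl, h⟩ := sig_heq h
  rw [eq_of_heq h]

theorem length_of_sig {i j i' j' : Q.V} {p : Q.Path i j} {q : Q.Path i' j'}
    (h : p.sig = q.sig) : p.length = q.length := by
  rw [← length_arrs, ← length_arrs, arrs_of_sig h]

theorem sig_of_arrs : ∀ {i j j' : Q.V} (p : Q.Path i j) (q : Q.Path i j'),
    p.arrs = q.arrs → p.sig = q.sig
  | _, _, _, nil _, nil _, _ => rfl
  | _, _, _, nil _, cons b q, h => by simp [arrs] at h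
  | _, _, _, cons a p, nil _, h => by simp [arrs] at h
  | _, _, _, cons a p, cons b q, h => by
      rw [arrs_cons, arrs_cons, List.cons.injEq] at h
      obtain ⟨h1, h2⟩ := h
      rw [Sigma.mk.inj_iff] at h1
      obtain ⟨-, h1⟩ := h1
      rw [heq_eq_eq, Sigma.mk.inj_iff] at h1
      obtain ⟨rfl, h1⟩ := h1
      obtain rfl := eq_of_heq h1
      have h3 := sig_of_arrs p q h2
      obtain ⟨-, rfl, h4⟩ := sig_heq h3
      rw [eq_of_heq h4]

theorem sig_of_arrs' : ∀ {i j i' j' : Q.V} (p : Q.Path i j) (q : Q.Path i' j'),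
    0 < p.length → p.arrs = q.arrs → p.sig = q.sig
  | _, _, _, _, nil _, _, hp, _ => by simp [length] at hp
  | _, _, _, _, cons a p, nil _, _, h => by simp [arrs] at h
  | _, _, _, _, cons a p, cons b q, _, h => by
      have h1 := h
      rw [arrs_cons, arrs_cons, List.cons.injEq] at h1
      obtain rfl : _ = _ := congrArg (fun z => z.1) h1.1
      exact sig_of_arrs _ _ h

theorem sig_nil_of_length {i j : Q.V} (p : Q.Path i j) (h : p.length = 0) :
    p.sig = (QD.Path.nil i).sig := by
  cases p with
  | nil => rfl
  | cons a p => simp [length] at h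

theorem exists_split : ∀ {i j : Q.V} (P : Q.Path i j) (m : ℕ), m ≤ P.length →
    ∃ (d : Q.V) (a : Q.Path i d) (b : Q.Path d j), P = a.comp b ∧ a.length = m
  | _, _, P, 0, _ => ⟨_, QD.Path.nil _, P, rfl, rfl⟩
  | _, _, QD.Path.nil _, m+1, hm => absurd hm (by simp [QD.Path.length])
  | _, _, QD.Path.cons a P, m+1, hm => by
      obtain ⟨d, u, v, h1, h2⟩ := exists_split P m (by
        rw [QD.Path.length] at hm; omega)
      exact ⟨d, QD.Path.cons a u, v, by rw [QD.Path.comp, h1], by rw [QD.Path.length, h2]⟩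

end QD.Path

end AuxPath
section AuxSeg

variable {Q : QD} {s : ℕ} [NeZero s] {w : ZMod s → Q.V}
variable {x : ∀ i : ZMod s, Q.Ar (w i) (w (i + 1))}

theorem sig_cast {a : Q.V} {v v' : ZMod s} (h : v = v') (p : Q.Path a (w v)) :
    (cast (congrArg (fun z : ZMod s => Q.Path a (w z)) h) p).sig = p.sig := by
  subst h; rfl

theorem seg_zero_sig (r : ZMod s) :
    (seg Q s w x r 0).sig = (QD.Path.nil (w r)).sig := by
  rw [seg]
  exact sig_cast (by push_cast; ring) _

theorem seg_succ_sig (r : ZMod s) (m : ℕ) :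
    (seg Q s w x r (m+1)).sig = (QD.Path.cons (x r) (seg Q s w x (r+1) m)).sig := by
  rw [seg]
  exact sig_cast (by push_cast; ring) _

theorem seg_congr {r r' : ZMod s} (h : r = r') (m : ℕ) :
    (seg Q s w x r m).sig = (seg Q s w x r' m).sig := by subst h; rfl

theorem length_seg (m : ℕ) : ∀ (r : ZMod s), (seg Q s w x r m).length = m := by
  induction m with
  | zero => intro r; rw [QD.Path.length_of_sig (seg_zero_sig r)]; rfl
  | succ m ih =>
      intro r
      rw [QD.Path.length_of_sig (seg_succ_sig r m), QD.Path.length, ih]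

theorem arrs_seg_add (a : ℕ) : ∀ (b : ℕ) (r : ZMod s),
    (seg Q s w x r (a + b)).arrs
      = (seg Q s w x r a).arrs ++ (seg Q s w x (r + (a : ZMod s)) b).arrs := by
  induction a with
  | zero =>
      intro b r
      rw [QD.Path.arrs_of_sig (seg_zero_sig r), QD.Path.arrs_nil, List.nil_append,
        Nat.zero_add]
      exact QD.Path.arrs_of_sig (seg_congr (by push_cast; ring) b)
  | succ a ih =>
      intro b r
      rw [Nat.succ_add, QD.Path.arrs_of_sig (seg_succ_sig r (a + b)), QD.Path.arrs_cons,
        ih b (r + 1), QD.Path.arrs_of_sig (seg_succ_sig r a), QD.Path.arrs_cons,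
        List.cons_append]
      congr 2
      exact QD.Path.arrs_of_sig (seg_congr (by push_cast; ring) b)

/-- The set of rotations `r` of the basic cycle `γ` which realize the bundled cycle `C`. -/
def rotS (Q : QD) (s : ℕ) [NeZero s] (w : ZMod s → Q.V)
    (x : ∀ i : ZMod s, Q.Ar (w i) (w (i + 1))) (C : QD.PathIn Q) : Finset (ZMod s) :=
  Finset.univ.filter (fun r => C = (seg Q s w x r s).sig)

theorem mem_rotS {C : QD.PathIn Q} {r : ZMod s} :
    r ∈ rotS Q s w x C ↔ C = (seg Q s w x r s).sig := by
  simp [rotS]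

theorem rotS_shift {c h : Q.V} (A : Q.Path c h) (B : Q.Path h c)
    (hA : 0 < A.length) (hB : 0 < B.length) {r : ZMod s}
    (hr : r ∈ rotS Q s w x (A.comp B).sig) :
    r + (A.length : ZMod s) ∈ rotS Q s w x (B.comp A).sig := by
  rw [mem_rotS] at hr ⊢
  have hlen : A.length + B.length = s := by
    have h1 := QD.Path.length_of_sig hr
    rwa [QD.Path.length_comp, length_seg] at h1
  have harr := QD.Path.arrs_of_sig hr
  rw [QD.Path.arrs_comp] at harr
  have he : (seg Q s w x r s).arrs
      = (seg Q s w x r A.length).arrs ++ (seg Q s w x (r + (A.length : ZMod s)) B.length).arrs := by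
    rw [← arrs_seg_add, hlen]
  rw [he] at harr
  obtain ⟨e1, e2⟩ := List.append_inj harr
    (by rw [QD.Path.length_arrs, QD.Path.length_arrs, length_seg])
  apply QD.Path.sig_of_arrs'
  · rw [QD.Path.length_comp]; omega
  · rw [QD.Path.arrs_comp, e1, e2]
    have he2 := arrs_seg_add (w := w) (x := x) B.length A.length (r + (A.length : ZMod s))
    have hba : B.length + A.length = s := by omega
    rw [hba] at he2
    rw [he2]
    congr 1
    exact QD.Path.arrs_of_sig (seg_congr (by
      have : ((A.length : ZMod s) + (B.length : ZMod s)) = 0 := by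
        have : ((A.length + B.length : ℕ) : ZMod s) = 0 := by rw [hlen, ZMod.natCast_self]
        push_cast at this
        exact this
      rw [add_assoc, this, add_zero]) A.length)

theorem rotS_card_rot {c h : Q.V} (A : Q.Path c h) (B : Q.Path h c)
    (hA : 0 < A.length) (hB : 0 < B.length) :
    (rotS Q s w x (A.comp B).sig).card = (rotS Q s w x (B.comp A).sig).card := by
  apply le_antisymm
  · exact Finset.card_le_card_of_injOn (fun r => r + (A.length : ZMod s))
      (fun r hr => rotS_shift A B hA hB hr)
      (fun a _ b _ hab => by simpa using hab)
  · exact Finset.card_le_card_of_injOn (fun r => r + (B.length : ZMod s))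
      (fun r hr => rotS_shift B A hB hA hr)
      (fun a _ b _ hab => by simpa using hab)

end AuxSeg
set_option linter.unusedSectionVars false

section AuxAlg

variable {K : Type} [Field K] {Q : QD} [Fintype Q.V] [∀ i j : Q.V, Fintype (Q.Ar i j)]
variable {n : ℕ} {PA : PathAlg K Q}

theorem cls_mul {i j l : Q.V} (p : Q.Path i j) (q : Q.Path j l) :
    cls K Q n PA (p.comp q) = cls K Q n PA p * cls K Q n PA q := by
  rw [cls, cls, cls, PA.ι_comp, map_mul]

theorem cls_long {i j : Q.V} (p : Q.Path i j) (h : n ≤ p.length) :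
    cls K Q n PA p = 0 := by
  have h1 : RingQuot.mkAlgHom K (truncRel K Q n PA) (PA.ι p)
      = RingQuot.mkAlgHom K (truncRel K Q n PA) 0 :=
    RingQuot.mkAlgHom_rel K ⟨rfl, ⟨p.sig, h, rfl⟩⟩
  rw [cls, h1, map_zero]

variable {basA : Module.Basis (Short Q n) K (TA K Q n PA)}

theorem cls_eq_basA (hbas : ∀ sp : Short Q n, basA sp = cls K Q n PA sp.1.2.2)
    {i j : Q.V} (p : Q.Path i j) (h : p.length < n) :
    cls K Q n PA p = basA ⟨p.sig, h⟩ :=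
  (hbas ⟨p.sig, h⟩).symm

theorem cls_short_ne (hbas : ∀ sp : Short Q n, basA sp = cls K Q n PA sp.1.2.2)
    {i j : Q.V} (p : Q.Path i j) (h : p.length < n) :
    cls K Q n PA p ≠ 0 := by
  rw [cls_eq_basA hbas p h]
  exact basA.ne_zero _

theorem lt_of_cls_ne {i j : Q.V} (p : Q.Path i j) (h : cls K Q n PA p ≠ 0) :
    p.length < n := by
  by_contra h2
  exact h (cls_long p (le_of_not_gt h2))

theorem coordP_cls (hbas : ∀ sp : Short Q n, basA sp = cls K Q n PA sp.1.2.2)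
    (P : QD.PathIn Q) (hP : P.2.2.length < n) {c d : Q.V} (q : Q.Path c d) :
    coordP K Q n PA basA P (cls K Q n PA q) = if q.sig = P then 1 else 0 := by
  rw [coordP, dif_pos hP]
  by_cases hq : q.sig = P
  · rw [if_pos hq]
    subst hq
    rw [cls_eq_basA hbas q hP, Module.Basis.coord_apply, Module.Basis.repr_self_apply, if_pos rfl]
  · rw [if_neg hq]
    by_cases hq2 : q.length < n
    · rw [cls_eq_basA hbas q hq2, Module.Basis.coord_apply, Module.Basis.repr_self_apply, if_neg]
      intro hcon
      exact hq (congrArg Subtype.val hcon)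
    · rw [cls_long q (le_of_not_gt hq2), map_zero]

end AuxAlg
section AuxEval

variable {K : Type} [Field K] {Q : QD} [Fintype Q.V] [∀ i j : Q.V, Fintype (Q.Ar i j)]
variable {n : ℕ} {PA : PathAlg K Q} {basA : Module.Basis (Short Q n) K (TA K Q n PA)}
variable {s : ℕ} [NeZero s] {w : ZMod s → Q.V} {x : ∀ i : ZMod s, Q.Ar (w i) (w (i + 1))}
variable {k : K} {αm : TA K Q n PA →ₗ[K] TA K Q n PA →ₗ[K] Module.Dual K (TA K Q n PA)}

theorem aTerm_eval (hbas : ∀ sp : Short Q n, basA sp = cls K Q n PA sp.1.2.2)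
    (hn : 2 ≤ n) (hs1 : n + 1 ≤ s) (hs2 : s ≤ 2 * n - 2)
    {c d h : Q.V} (a : Q.Path c d) (b : Q.Path d h) (q : Q.Path h c)
    (ha : cls K Q n PA a ≠ 0) (hb : cls K Q n PA b ≠ 0) (hab : n ≤ a.length + b.length)
    (r : ZMod s) :
    aTerm K Q n PA basA s w x a b r (cls K Q n PA q)
      = if ((a.comp b).comp q).sig = (seg Q s w x r s).sig then (1:K) else 0 := by
  have hL : (a.comp b).length = a.length + b.length := QD.Path.length_comp a b
  have hla : a.length < n := lt_of_cls_ne a ha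
  have hlb : b.length < n := lt_of_cls_ne b hb
  have hPseg : (seg Q s w x (r + (((a.comp b).length : ℕ) : ZMod s))
      (s - (a.comp b).length)).length < n := by
    rw [length_seg, hL]; omega
  have hPnil : (QD.Path.nil (Q := Q) (w r)).length < n := by
    have : (QD.Path.nil (Q := Q) (w r)).length = 0 := rfl
    omega
  rcases lt_trichotomy (a.length + b.length) s with hlt | heqs | hgt
  · -- a.length + b.length < s
    by_cases hr : ((a.comp b).comp q).sig = (seg Q s w x r s).sig
    · rw [if_pos hr]
      have ht1 := QD.Path.length_of_sig hr
      rw [QD.Path.length_comp, length_seg, hL] at ht1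
      have harr := QD.Path.arrs_of_sig hr
      rw [QD.Path.arrs_comp] at harr
      have hsplit := arrs_seg_add (w := w) (x := x) (a.length + b.length)
        (s - (a.length + b.length)) r
      have hss : a.length + b.length + (s - (a.length + b.length)) = s := by omega
      rw [hss] at hsplit
      rw [hsplit] at harr
      obtain ⟨e1, e2⟩ := List.append_inj harr (by
        rw [QD.Path.length_arrs, QD.Path.length_arrs, QD.Path.length_comp, length_seg])
      have sig1 : (a.comp b).sig = (seg Q s w x r ((a.comp b).length)).sig := by
        rw [hL]
        exact QD.Path.sig_of_arrs' _ _ (by rw [QD.Path.length_comp]; omega) e1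
      have sig2 : q.sig = (seg Q s w x (r + (((a.comp b).length : ℕ) : ZMod s))
          (s - (a.comp b).length)).sig := by
        rw [hL]
        exact QD.Path.sig_of_arrs' _ _ (by omega) e2
      unfold aTerm
      rw [if_pos ⟨ha, hb, by rw [hL]; exact hab, by rw [hL]; exact hlt, sig1⟩]
      rw [coordP_cls hbas _ hPseg, if_pos sig2]
    · rw [if_neg hr]
      unfold aTerm
      by_cases hc1 : (cls K Q n PA a ≠ 0 ∧ cls K Q n PA b ≠ 0 ∧ n ≤ (a.comp b).length ∧
          (a.comp b).length < s ∧ (a.comp b).sig = (seg Q s w x r ((a.comp b).length)).sig)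
      · rw [if_pos hc1, coordP_cls hbas _ hPseg, if_neg]
        intro sig2
        apply hr
        apply QD.Path.sig_of_arrs' _ _ (by rw [QD.Path.length_comp, QD.Path.length_comp]; omega)
        rw [QD.Path.arrs_comp, QD.Path.arrs_of_sig hc1.2.2.2.2, QD.Path.arrs_of_sig sig2]
        have hadd := arrs_seg_add (w := w) (x := x) ((a.comp b).length)
          (s - (a.comp b).length) r
        have hLs : (a.comp b).length + (s - (a.comp b).length) = s := by omega
        rw [hLs] at hadd
        rw [hadd]
      · rw [if_neg hc1]
        rw [if_neg (by rintro ⟨-, -, hls, -⟩; rw [hL] at hls; omega :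
          ¬ (cls K Q n PA a ≠ 0 ∧ cls K Q n PA b ≠ 0 ∧ (a.comp b).length = s ∧
            (a.comp b).sig = (seg Q s w x r s).sig))]
        rfl
  · -- a.length + b.length = s
    have hc1 : ¬ (cls K Q n PA a ≠ 0 ∧ cls K Q n PA b ≠ 0 ∧ n ≤ (a.comp b).length ∧
        (a.comp b).length < s ∧ (a.comp b).sig = (seg Q s w x r ((a.comp b).length)).sig) := by
      rintro ⟨-, -, -, hlt', -⟩; rw [hL] at hlt'; omega
    by_cases hr : ((a.comp b).comp q).sig = (seg Q s w x r s).sig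
    · rw [if_pos hr]
      have ht1 := QD.Path.length_of_sig hr
      rw [QD.Path.length_comp, length_seg, hL] at ht1
      have hq0 : q.length = 0 := by omega
      have harrq : q.arrs = [] := by
        have h2 := QD.Path.length_arrs q
        rw [hq0] at h2
        exact List.length_eq_zero_iff.mp h2
      have sigab : (a.comp b).sig = (seg Q s w x r s).sig := by
        apply QD.Path.sig_of_arrs' _ _ (by rw [QD.Path.length_comp]; omega)
        have h3 := QD.Path.arrs_of_sig hr
        rwa [QD.Path.arrs_comp, harrq, List.append_nil] at h3
      unfold aTerm
      rw [if_neg hc1, if_pos ⟨ha, hb, by rw [hL]; exact heqs, sigab⟩]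
      rw [coordP_cls hbas _ hPnil, if_pos]
      have hq_nil := QD.Path.sig_nil_of_length q hq0
      have hch : c = h := (QD.Path.sig_heq hq_nil).2.1
      have hwr : c = w r := (QD.Path.sig_heq sigab).1
      have hhw : h = w r := hch ▸ hwr
      rw [hq_nil, hhw]
    · rw [if_neg hr]
      unfold aTerm
      rw [if_neg hc1]
      by_cases hc2 : (cls K Q n PA a ≠ 0 ∧ cls K Q n PA b ≠ 0 ∧ (a.comp b).length = s ∧
          (a.comp b).sig = (seg Q s w x r s).sig)
      · rw [if_pos hc2, coordP_cls hbas _ hPnil, if_neg]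
        intro hqn
        apply hr
        apply QD.Path.sig_of_arrs' _ _ (by rw [QD.Path.length_comp, hL]; omega)
        rw [QD.Path.arrs_comp, QD.Path.arrs_of_sig hqn, QD.Path.arrs_nil, List.append_nil]
        exact QD.Path.arrs_of_sig hc2.2.2.2
      · rw [if_neg hc2]; rfl
  · -- s < a.length + b.length
    have hrf : ¬ ((a.comp b).comp q).sig = (seg Q s w x r s).sig := by
      intro hr
      have ht1 := QD.Path.length_of_sig hr
      rw [QD.Path.length_comp, length_seg, hL] at ht1
      omega
    rw [if_neg hrf]
    unfold aTerm
    rw [if_neg (by rintro ⟨-, -, -, hlt', -⟩; rw [hL] at hlt'; omega :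
      ¬ (cls K Q n PA a ≠ 0 ∧ cls K Q n PA b ≠ 0 ∧ n ≤ (a.comp b).length ∧
        (a.comp b).length < s ∧ (a.comp b).sig = (seg Q s w x r ((a.comp b).length)).sig))]
    rw [if_neg (by rintro ⟨-, -, hls, -⟩; rw [hL] at hls; omega :
      ¬ (cls K Q n PA a ≠ 0 ∧ cls K Q n PA b ≠ 0 ∧ (a.comp b).length = s ∧
        (a.comp b).sig = (seg Q s w x r s).sig))]
    rfl

theorem eval_rot (hbas : ∀ sp : Short Q n, basA sp = cls K Q n PA sp.1.2.2)
    (hα : ∀ {i j l : Q.V} (a : Q.Path i j) (b : Q.Path j l),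
      αm (cls K Q n PA a) (cls K Q n PA b) =
        k • ∑ r : ZMod s, aTerm K Q n PA basA s w x a b r)
    (hn : 2 ≤ n) (hs1 : n + 1 ≤ s) (hs2 : s ≤ 2 * n - 2)
    {c d h : Q.V} (a : Q.Path c d) (b : Q.Path d h) (q : Q.Path h c)
    (ha : cls K Q n PA a ≠ 0) (hb : cls K Q n PA b ≠ 0) (hab : n ≤ a.length + b.length) :
    αm (cls K Q n PA a) (cls K Q n PA b) (cls K Q n PA q)
      = k * ((rotS Q s w x ((a.comp b).comp q).sig).card : K) := by
  rw [hα a b, LinearMap.smul_apply, LinearMap.sum_apply,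
    Finset.sum_congr rfl (fun r _ => aTerm_eval hbas hn hs1 hs2 a b q ha hb hab r),
    Finset.sum_boole, smul_eq_mul]
  rfl

end AuxEval
section AuxRev

variable {K : Type} [Field K] {Q : QD} [Fintype Q.V] [∀ i j : Q.V, Fintype (Q.Ar i j)]
variable {n : ℕ} {PA : PathAlg K Q} {basA : Module.Basis (Short Q n) K (TA K Q n PA)}
variable {s : ℕ} [NeZero s] {w : ZMod s → Q.V} {x : ∀ i : ZMod s, Q.Ar (w i) (w (i + 1))}
variable {k : K} {αm : TA K Q n PA →ₗ[K] TA K Q n PA →ₗ[K] Module.Dual K (TA K Q n PA)}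

theorem norev (hbas : ∀ sp : Short Q n, basA sp = cls K Q n PA sp.1.2.2)
    (hα : ∀ {i j l : Q.V} (a : Q.Path i j) (b : Q.Path j l),
      αm (cls K Q n PA a) (cls K Q n PA b) =
        k • ∑ r : ZMod s, aTerm K Q n PA basA s w x a b r)
    (hn : 2 ≤ n) (hs1 : n + 1 ≤ s) (hs2 : s ≤ 2 * n - 2)
    {h : Q.V} (C : Q.Path h h) (hC : ¬ IsRev K Q n PA αm C)
    (r0 : ZMod s) (hr0 : r0 ∈ rotS Q s w x C.sig) :
    k * ((rotS Q s w x C.sig).card : K) = 0 := by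
  have hlen : C.length = s := by
    rw [mem_rotS] at hr0
    rw [QD.Path.length_of_sig hr0, length_seg]
  obtain ⟨d, a, b, hCe, hla⟩ := QD.Path.exists_split C (s - (n - 1)) (by omega)
  have hlb : b.length = n - 1 := by
    have h2 := QD.Path.length_comp a b
    rw [← hCe, hlen, hla] at h2
    omega
  have ha : cls K Q n PA a ≠ 0 := cls_short_ne hbas a (by omega)
  have hb : cls K Q n PA b ≠ 0 := cls_short_ne hbas b (by omega)
  have heval := eval_rot hbas hα hn hs1 hs2 a b (QD.Path.nil h) ha hb (by omega)
  rw [QD.Path.comp_nil, ← hCe] at heval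
  by_contra hne
  apply hC
  refine ⟨d, a, b, by omega, by omega, ha, hb, hCe, ?_⟩
  intro h0
  rw [h0] at heval
  exact hne (by rw [← heval]; rfl)

theorem am_nil (hbas : ∀ sp : Short Q n, basA sp = cls K Q n PA sp.1.2.2)
    (hα : ∀ {i j l : Q.V} (a : Q.Path i j) (b : Q.Path j l),
      αm (cls K Q n PA a) (cls K Q n PA b) =
        k • ∑ r : ZMod s, aTerm K Q n PA basA s w x a b r)
    (hn : 2 ≤ n) (hs1 : n + 1 ≤ s) (hs2 : s ≤ 2 * n - 2)
    {c d : Q.V} (a : Q.Path c d) (b : Q.Path d c)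
    (hrev : ¬ IsRev K Q n PA αm (a.comp b)) :
    αm (cls K Q n PA a) (cls K Q n PA b) (cls K Q n PA (QD.Path.nil c)) = 0 := by
  by_cases ha : cls K Q n PA a = 0
  · rw [ha, map_zero]; rfl
  by_cases hb : cls K Q n PA b = 0
  · rw [hb, map_zero]; rfl
  by_cases hab : n ≤ a.length + b.length
  · rw [eval_rot hbas hα hn hs1 hs2 a b (QD.Path.nil c) ha hb hab, QD.Path.comp_nil]
    rcases Finset.eq_empty_or_nonempty (rotS Q s w x (a.comp b).sig) with he | ⟨r0, hr0⟩
    · rw [he]; simp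
    · exact norev hbas hα hn hs1 hs2 (a.comp b) hrev r0 hr0
  · have hL : (a.comp b).length = a.length + b.length := QD.Path.length_comp a b
    rw [hα a b, LinearMap.smul_apply, LinearMap.sum_apply]
    have hz : ∀ r ∈ (Finset.univ : Finset (ZMod s)),
        aTerm K Q n PA basA s w x a b r (cls K Q n PA (QD.Path.nil c)) = 0 := by
      intro r _
      unfold aTerm
      rw [if_neg (by rintro ⟨-, -, hge, -⟩; rw [hL] at hge; omega :
        ¬ (cls K Q n PA a ≠ 0 ∧ cls K Q n PA b ≠ 0 ∧ n ≤ (a.comp b).length ∧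
          (a.comp b).length < s ∧ (a.comp b).sig = (seg Q s w x r ((a.comp b).length)).sig))]
      rw [if_neg (by rintro ⟨-, -, hls, -⟩; rw [hL] at hls; omega :
        ¬ (cls K Q n PA a ≠ 0 ∧ cls K Q n PA b ≠ 0 ∧ (a.comp b).length = s ∧
          (a.comp b).sig = (seg Q s w x r s).sig))]
      rfl
    rw [Finset.sum_congr rfl hz, Finset.sum_const_zero, smul_zero]

theorem fterm0 (hbas : ∀ sp : Short Q n, basA sp = cls K Q n PA sp.1.2.2)
    (hα : ∀ {i j l : Q.V} (a : Q.Path i j) (b : Q.Path j l),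
      αm (cls K Q n PA a) (cls K Q n PA b) =
        k • ∑ r : ZMod s, aTerm K Q n PA basA s w x a b r)
    (hn : 2 ≤ n) (hs1 : n + 1 ≤ s) (hs2 : s ≤ 2 * n - 2)
    {c c2 h : Q.V} (a : Q.Ar c c2) (p : Q.Path c2 h) (q : Q.Path h c)
    (hrev : ¬ IsRev K Q n PA αm (q.comp (QD.Path.cons a p))) :
    αm (cls K Q n PA (QD.Path.cons a (QD.Path.nil c2))) (cls K Q n PA p)
      (cls K Q n PA q) = 0 := by
  have hL : (QD.Path.cons a (QD.Path.nil c2)).length = 1 := rfl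
  by_cases hb : cls K Q n PA p = 0
  · rw [hb, map_zero]; rfl
  by_cases hab : n ≤ (QD.Path.cons a (QD.Path.nil c2)).length + p.length
  · have ha : cls K Q n PA (QD.Path.cons a (QD.Path.nil c2)) ≠ 0 :=
      cls_short_ne hbas _ (by rw [hL]; omega)
    rw [eval_rot hbas hα hn hs1 hs2 _ p q ha hb hab]
    have hpa : (QD.Path.cons a (QD.Path.nil c2)).comp p = QD.Path.cons a p := rfl
    rw [hpa]
    by_cases hq : q.length = 0
    · have hsig := QD.Path.sig_nil_of_length q hq
      obtain ⟨-, hc, hqe⟩ := QD.Path.sig_heq hsig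
      subst hc
      obtain rfl := eq_of_heq hqe
      rw [QD.Path.comp_nil]
      rcases Finset.eq_empty_or_nonempty (rotS Q s w x (QD.Path.cons a p).sig)
        with he | ⟨r0, hr0⟩
      · rw [he]; simp
      · exact norev hbas hα hn hs1 hs2 (QD.Path.cons a p) hrev r0 hr0
    · rw [rotS_card_rot (QD.Path.cons a p) q (by rw [QD.Path.length]; omega)
        (Nat.pos_of_ne_zero hq)]
      rcases Finset.eq_empty_or_nonempty (rotS Q s w x (q.comp (QD.Path.cons a p)).sig)
        with he | ⟨r0, hr0⟩
      · rw [he]; simp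
      · exact norev hbas hα hn hs1 hs2 _ hrev r0 hr0
  · have hL2 : (QD.Path.cons a p).length = 1 + p.length := by
      rw [QD.Path.length]; omega
    rw [hα _ p, LinearMap.smul_apply, LinearMap.sum_apply]
    have hz : ∀ r ∈ (Finset.univ : Finset (ZMod s)),
        aTerm K Q n PA basA s w x (QD.Path.cons a (QD.Path.nil c2)) p r
          (cls K Q n PA q) = 0 := by
      intro r _
      unfold aTerm
      have hcomp : ((QD.Path.cons a (QD.Path.nil c2)).comp p).length = 1 + p.length := by
        rw [QD.Path.length_comp, hL]
      rw [if_neg (by rintro ⟨-, -, hge, -⟩; rw [hcomp] at hge; omega :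
        ¬ (cls K Q n PA (QD.Path.cons a (QD.Path.nil c2)) ≠ 0 ∧ cls K Q n PA p ≠ 0 ∧
          n ≤ ((QD.Path.cons a (QD.Path.nil c2)).comp p).length ∧
          ((QD.Path.cons a (QD.Path.nil c2)).comp p).length < s ∧
          ((QD.Path.cons a (QD.Path.nil c2)).comp p).sig
            = (seg Q s w x r (((QD.Path.cons a (QD.Path.nil c2)).comp p).length)).sig))]
      rw [if_neg (by rintro ⟨-, -, hls, -⟩; rw [hcomp] at hls; omega :
        ¬ (cls K Q n PA (QD.Path.cons a (QD.Path.nil c2)) ≠ 0 ∧ cls K Q n PA p ≠ 0 ∧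
          ((QD.Path.cons a (QD.Path.nil c2)).comp p).length = s ∧
          ((QD.Path.cons a (QD.Path.nil c2)).comp p).sig = (seg Q s w x r s).sig))]
      rfl
    rw [Finset.sum_congr rfl hz, Finset.sum_const_zero, smul_zero]

end AuxRev
section AuxStrip

variable {K : Type} [Field K] {Q : QD} [Fintype Q.V] [∀ i j : Q.V, Fintype (Q.Ar i j)]
variable {n : ℕ} {PA : PathAlg K Q} {t : ℕ} {pM : Fin t → QD.PathIn Q}
variable {T : Type} [Ring T] [Algebra K T]
variable {eT : T ≃ₗ[K] TA K Q n PA × Module.Dual K (TA K Q n PA)}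
variable {PB : PathAlg K (Qe Q t pM)} {Φm : PB.P →ₐ[K] T}

theorem strip_aux
    (prod1 : ∀ X Y : PB.P, (eT (Φm (X * Y))).1 = (eT (Φm X)).1 * (eT (Φm Y)).1)
    (hy : ∀ m : Fin t,
      (eT (Φm (PB.ι (QD.Path.cons (yArr Q t pM m)
        (QD.Path.nil (Q := Qe Q t pM) (pM m).1))))).1 = 0) :
    ∀ {c d : Q.V} (P : (Qe Q t pM).Path c d),
      (∃ P₀ : Q.Path c d, P = embed Q t pM P₀) ∨ (eT (Φm (PB.ι P))).1 = 0
  | _, _, QD.Path.nil c => Or.inl ⟨QD.Path.nil (Q := Q) c, rfl⟩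
  | _, _, QD.Path.cons (Sum.inl a) P => by
      rcases strip_aux prod1 hy P with ⟨P₀, rfl⟩ | h0
      · exact Or.inl ⟨QD.Path.cons a P₀, rfl⟩
      · right
        have e1 : PB.ι (QD.Path.cons (Q := Qe Q t pM) (Sum.inl a) P)
            = PB.ι (QD.Path.cons (Sum.inl a) (QD.Path.nil (Q := Qe Q t pM) _))
              * PB.ι P := by
          rw [← PB.ι_comp]
          rfl
        rw [e1, prod1, h0, mul_zero]
  | _, _, QD.Path.cons (Sum.inr ⟨m, hm1, hm2⟩) P => by
      right
      subst hm1
      subst hm2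
      have e1 : PB.ι (QD.Path.cons (Q := Qe Q t pM) (yArr Q t pM m) P)
          = PB.ι (QD.Path.cons (yArr Q t pM m)
              (QD.Path.nil (Q := Qe Q t pM) (pM m).1)) * PB.ι P := by
        rw [← PB.ι_comp]
        rfl
      have e2 : (eT (Φm (PB.ι (QD.Path.cons (Q := Qe Q t pM) (yArr Q t pM m) P)))).1 = 0 := by
        rw [e1, prod1, hy m, zero_mul]
      exact e2

end AuxStrip
section Statements

variable (K : Type) [Field K] (Q : QD) [Fintype Q.V] [∀ i j : Q.V, Fintype (Q.Ar i j)]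
variable (n : ℕ) (PA : PathAlg K Q)
variable (basA : Module.Basis (Short Q n) K (TA K Q n PA))
variable (s : ℕ) [NeZero s] (w : ZMod s → Q.V) (x : ∀ i : ZMod s, Q.Ar (w i) (w (i + 1)))
variable (k : K)
variable (αm : TA K Q n PA →ₗ[K] TA K Q n PA →ₗ[K] Module.Dual K (TA K Q n PA))
variable (t : ℕ) (pM : Fin t → QD.PathIn Q)
variable (T : Type) [Ring T] [Algebra K T]
variable (eT : T ≃ₗ[K] TA K Q n PA × Module.Dual K (TA K Q n PA))
variable (PB : PathAlg K (Qe Q t pM))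
variable (Φm : PB.P →ₐ[K] T)

/-- if `u` is a path `i → j` of `KΔ`, `v` a path `j → i` of the extended
quiver and neither `uv` nor `vu` is `α`-revived, then
`φ₂(v)(ū) = φ₂(vu)(ē_j) = φ₂(uv)(ē_i)`. -/
theorem stmt8
    [IsAlgClosed K]
    (hn : 2 ≤ n)
    (hdim : 1 < Module.finrank K (TA K Q n PA))
    (hconn : ∀ i j : Q.V,
      Relation.EqvGen (fun u v : Q.V => Nonempty (Q.Ar u v) ∨ Nonempty (Q.Ar v u)) i j)
    (hcyc : ∀ (i : Q.V) (p : Q.Path i i), 0 < p.length → cls K Q n PA p = 0)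
    (hbas : ∀ sp : Short Q n, basA sp = cls K Q n PA sp.1.2.2)
    (hs1 : n + 1 ≤ s) (hs2 : s ≤ 2 * n - 2)
    (hk : k ≠ 0)
    (hα : ∀ {i j l : Q.V} (a : Q.Path i j) (b : Q.Path j l),
      αm (cls K Q n PA a) (cls K Q n PA b) =
        k • ∑ r : ZMod s, aTerm K Q n PA basA s w x a b r)
    (hcoc : ∀ a b c : TA K Q n PA,
      dL K Q n PA a (αm b c) + αm a (b * c) = αm (a * b) c + dR K Q n PA (αm a b) c)
    (hMlt : ∀ m : Fin t, (pM m).2.2.length < n)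
    (hMli : LinearIndependent K fun m : Fin t => cls K Q n PA (pM m).2.2)
    (hMsp : Submodule.span K (Set.range fun m : Fin t => cls K Q n PA (pM m).2.2)
      = socA K Q n PA)
    (hTmul : ∀ u v : T, eT (u * v) = ((eT u).1 * (eT v).1,
      dL K Q n PA (eT u).1 (eT v).2 + dR K Q n PA (eT u).2 (eT v).1 + αm (eT u).1 (eT v).1))
    (hTone : eT 1 = (1, 0))
    (hΦnil : ∀ i : Q.V, Φm (PB.ι (QD.Path.nil (Q := Qe Q t pM) i))
      = eT.symm (cls K Q n PA (QD.Path.nil i), 0))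
    (hΦarr : ∀ {i j : Q.V} (a : Q.Ar i j),
      Φm (PB.ι (QD.Path.cons (Sum.inl a) (QD.Path.nil (Q := Qe Q t pM) j)))
      = eT.symm (cls K Q n PA (QD.Path.cons a (QD.Path.nil j)), 0))
    (hΦy : ∀ m : Fin t,
      Φm (PB.ι (QD.Path.cons (yArr Q t pM m) (QD.Path.nil (Q := Qe Q t pM) (pM m).1)))
      = eT.symm (0, coordP K Q n PA basA (pM m)))
    (hΦsurj : Function.Surjective Φm)
    {i j : Q.V} (u : Q.Path i j) (v : (Qe Q t pM).Path j i)
    (h1 : ¬ IsRevE K Q n PA αm t pM ((embed Q t pM u).comp v))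
    (h2 : ¬ IsRevE K Q n PA αm t pM (v.comp (embed Q t pM u))) :
    ph2 K Q n PA t pM T eT PB Φm (PB.ι v) (cls K Q n PA u)
      = ph2 K Q n PA t pM T eT PB Φm (PB.ι (v.comp (embed Q t pM u)))
          (cls K Q n PA (QD.Path.nil j)) ∧
    ph2 K Q n PA t pM T eT PB Φm (PB.ι (v.comp (embed Q t pM u)))
        (cls K Q n PA (QD.Path.nil j))
      = ph2 K Q n PA t pM T eT PB Φm (PB.ι ((embed Q t pM u).comp v))
          (cls K Q n PA (QD.Path.nil i)) := by
  classical
  -- first-component multiplication formula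
  have prod1 : ∀ X Y : PB.P, (eT (Φm (X * Y))).1 = (eT (Φm X)).1 * (eT (Φm Y)).1 := by
    intro X Y
    rw [map_mul, hTmul]
  -- second-component multiplication formula
  have prod2 : ∀ (X Y : PB.P) (z : TA K Q n PA),
      (eT (Φm (X * Y))).2 z
        = (eT (Φm Y)).2 (z * (eT (Φm X)).1) + (eT (Φm X)).2 ((eT (Φm Y)).1 * z)
          + αm (eT (Φm X)).1 (eT (Φm Y)).1 z := by
    intro X Y z
    rw [map_mul, hTmul]
    simp only [dL, dR, LinearMap.add_apply, LinearMap.comp_apply,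
      LinearMap.mulRight_apply, LinearMap.mulLeft_apply]
  -- φ₁ on embedded paths
  have G_emb : ∀ {c d : Q.V} (p : Q.Path c d),
      (eT (Φm (PB.ι (embed Q t pM p)))).1 = cls K Q n PA p := by
    intro c d p
    induction p with
    | nil c =>
        rw [show embed Q t pM (QD.Path.nil c) = QD.Path.nil (Q := Qe Q t pM) c from rfl,
          hΦnil c, LinearEquiv.apply_symm_apply]
    | cons a p ih =>
        have e1 : PB.ι (embed Q t pM (QD.Path.cons a p))
            = PB.ι (QD.Path.cons (Sum.inl a) (QD.Path.nil (Q := Qe Q t pM) _))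
              * PB.ι (embed Q t pM p) := by
          rw [← PB.ι_comp]
          rfl
        rw [e1, prod1, hΦarr a, LinearEquiv.apply_symm_apply, ih]
        exact (cls_mul _ p).symm
  -- φ₂ on a trivial embedded path
  have F_nil : ∀ cc : Q.V, (eT (Φm (PB.ι (embed Q t pM (QD.Path.nil cc))))).2 = 0 := by
    intro cc
    rw [show embed Q t pM (QD.Path.nil cc) = QD.Path.nil (Q := Qe Q t pM) cc from rfl,
      hΦnil cc, LinearEquiv.apply_symm_apply]
  -- recursion formula for φ₂ on embedded paths
  have F_cons : ∀ {c c2 hh : Q.V} (a : Q.Ar c c2) (p : Q.Path c2 hh) (z : TA K Q n PA),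
      (eT (Φm (PB.ι (embed Q t pM (QD.Path.cons a p))))).2 z
        = (eT (Φm (PB.ι (embed Q t pM p)))).2
            (z * cls K Q n PA (QD.Path.cons a (QD.Path.nil c2)))
          + αm (cls K Q n PA (QD.Path.cons a (QD.Path.nil c2))) (cls K Q n PA p) z := by
    intro c c2 hh a p z
    have e1 : PB.ι (embed Q t pM (QD.Path.cons a p))
        = PB.ι (QD.Path.cons (Sum.inl a) (QD.Path.nil (Q := Qe Q t pM) c2))
          * PB.ι (embed Q t pM p) := by
      rw [← PB.ι_comp]
      rfl
    rw [e1, prod2, hΦarr a, LinearEquiv.apply_symm_apply, G_emb p]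
    have hp1 : ((cls K Q n PA (QD.Path.cons a (QD.Path.nil c2)),
        (0 : Module.Dual K (TA K Q n PA))) : TA K Q n PA × Module.Dual K (TA K Q n PA)).1
        = cls K Q n PA (QD.Path.cons a (QD.Path.nil c2)) := rfl
    have hp2 : ((cls K Q n PA (QD.Path.cons a (QD.Path.nil c2)),
        (0 : Module.Dual K (TA K Q n PA))) : TA K Q n PA × Module.Dual K (TA K Q n PA)).2
        = (0 : Module.Dual K (TA K Q n PA)) := rfl
    rw [hp1, hp2, LinearMap.zero_apply, add_zero]
  -- vanishing of φ₂ on embedded paths at classes closing a non-revived cycle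
  have F_eval : ∀ {c hh : Q.V} (p : Q.Path c hh), ∀ q : Q.Path hh c,
      ¬ IsRev K Q n PA αm (q.comp p) →
      (eT (Φm (PB.ι (embed Q t pM p)))).2 (cls K Q n PA q) = 0 := by
    intro c hh p
    induction p with
    | nil c =>
        intro q hq
        rw [F_nil c]
        rfl
    | cons a p ih =>
        intro q hrev
        rw [F_cons a p (cls K Q n PA q),
          ← cls_mul q (QD.Path.cons a (QD.Path.nil _)),
          ih (q.comp (QD.Path.cons a (QD.Path.nil _))) (by
            rw [QD.Path.comp_assoc]
            exact hrev),
          fterm0 hbas (fun a b => hα a b) hn hs1 hs2 a p q hrev, add_zero]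
  -- every path of the extended quiver is embedded or has vanishing φ₁
  have strip : ∀ {c d : Q.V} (P : (Qe Q t pM).Path c d),
      (∃ P₀ : Q.Path c d, P = embed Q t pM P₀) ∨ (eT (Φm (PB.ι P))).1 = 0 :=
    fun {c d} P => strip_aux prod1 (fun m => by rw [hΦy m, LinearEquiv.apply_symm_apply]) P
  -- embedding commutes with composition
  have embed_comp : ∀ {c d e : Q.V} (p : Q.Path c d) (q : Q.Path d e),
      embed Q t pM (p.comp q) = (embed Q t pM p).comp (embed Q t pM q) := by
    intro c d e p q
    induction p with
    | nil c => rfl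
    | cons a p ih =>
        show QD.Path.cons (Sum.inl a) (embed Q t pM (p.comp q)) = _
        rw [ih]
        rfl
  -- auxiliary multiplications with trivial paths
  have hnrj : cls K Q n PA u * cls K Q n PA (QD.Path.nil j) = cls K Q n PA u := by
    rw [← cls_mul, QD.Path.comp_nil]
  have hnli : cls K Q n PA (QD.Path.nil i) * cls K Q n PA u = cls K Q n PA u :=
    (cls_mul (QD.Path.nil i) u).symm
  simp only [ph2]
  rcases strip v with ⟨v₀, rfl⟩ | hx0
  · -- `v` is an embedded path
    have hrev2 : ¬ IsRev K Q n PA αm (v₀.comp u) := by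
      intro hr
      exact h2 ⟨v₀.comp u, by rw [embed_comp], hr⟩
    have hrev1 : ¬ IsRev K Q n PA αm (u.comp v₀) := by
      intro hr
      exact h1 ⟨u.comp v₀, by rw [embed_comp], hr⟩
    have hnlv : cls K Q n PA (QD.Path.nil j) * cls K Q n PA v₀ = cls K Q n PA v₀ :=
      (cls_mul (QD.Path.nil j) v₀).symm
    have hnrv : cls K Q n PA v₀ * cls K Q n PA (QD.Path.nil i) = cls K Q n PA v₀ := by
      rw [← cls_mul, QD.Path.comp_nil]
    constructor
    · rw [PB.ι_comp, prod2, G_emb u, G_emb v₀, hnlv, hnrj,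
        F_eval u v₀ hrev2,
        am_nil hbas (fun a b => hα a b) hn hs1 hs2 v₀ u hrev2,
        zero_add, add_zero]
    · rw [PB.ι_comp, PB.ι_comp, prod2, prod2, G_emb u, G_emb v₀, hnlv, hnrj, hnli, hnrv,
        F_eval u v₀ hrev2,
        am_nil hbas (fun a b => hα a b) hn hs1 hs2 v₀ u hrev2,
        am_nil hbas (fun a b => hα a b) hn hs1 hs2 u v₀ hrev1]
      simp only [zero_add, add_zero]
  · -- `v` has vanishing φ₁
    constructor
    · rw [PB.ι_comp, prod2, G_emb u, hx0]
      simp [hnrj]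
    · rw [PB.ι_comp, PB.ι_comp, prod2, prod2, G_emb u, hx0]
      simp [hnrj, hnli]

end Statements
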